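/- arXiv:1601.06136 — 4 statements merged into one kernel-verified Lean document; each statement's English description precedes it below -/
import Mathlib

section
/- Let V be a finite-dimensional real inner product space and let ω be a nondegenerate alternating bilinear form on V. Then there exists a linear map J : V → V such that J ∘ J = −id, ω(J x, J y) = ω(x, y) for all x, y ∈ V, and ω(x, J x) > 0 for every x ≠ 0. (Consequently g(x,y) := ω(x, J y) is an inner product compatible with ω and J.) -/
/-!
Write `ω x y = ⟪A x, y⟫`; alternation makes `A` skew-adjoint and nondegeneracy makes it injective,
so `P = A⋆A = -A²` is positive definite. With `U = P^(-1/4)` (continuous functional calculus,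
transported from matrices along an orthonormal basis), `J = A U²` is the orthogonal part of the
polar decomposition of `A`: it commutes with `A`, satisfies `J⋆J = 1` and `J² = -1`, hence
preserves `ω`, and `ω x (J x) = ‖A (U x)‖² > 0`.
-/

open scoped RealInnerProductSpace

theorem IsSelfAdjoint.exists_pow_four_mul_eq_one {A : Type*} [Ring A] [StarRing A] [Algebra ℝ A]
    [TopologicalSpace A] [IsTopologicalRing A] [T2Space A]
    [ContinuousFunctionalCalculus ℝ A IsSelfAdjoint]
    {p : A} (hp : IsSelfAdjoint p) (hspec : ∀ μ ∈ spectrum ℝ p, 0 < μ) :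
    ∃ u : A, IsSelfAdjoint u ∧ (∀ b, Commute p b → Commute u b) ∧ u ^ 4 * p = 1 := by
  have hcont : ContinuousOn (fun t : ℝ => t ^ (-(1 / 4) : ℝ)) (spectrum ℝ p) :=
    continuousOn_id.rpow_const fun t ht => .inl (hspec t ht).ne'
  refine ⟨cfc (fun t : ℝ => t ^ (-(1 / 4) : ℝ)) p, cfc_predicate _ _,
    fun b hb => hb.cfc_real _, ?_⟩
  calc _ = cfc (fun t : ℝ => (t ^ (-(1 / 4) : ℝ)) ^ 4 * t) p := by
        rw [cfc_mul .., cfc_pow .., cfc_id' ℝ p]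
    _ = cfc (fun _ : ℝ => (1 : ℝ)) p := cfc_congr fun t ht => by
        rw [← Real.rpow_mul_natCast (hspec t ht).le, ← Real.rpow_add_one (hspec t ht).ne']
        norm_num
    _ = 1 := cfc_const_one ℝ p

section

variable {V : Type*} [NormedAddCommGroup V] [InnerProductSpace ℝ V] [FiniteDimensional ℝ V]

theorem LinearMap.exists_pow_four_mul_eq_one {P : Module.End ℝ V} (hP : IsSelfAdjoint P)
    (hspec : ∀ μ ∈ spectrum ℝ P, 0 < μ) :
    ∃ U : Module.End ℝ V, IsSelfAdjoint U ∧ (∀ B, Commute P B → Commute U B) ∧ U ^ 4 * P = 1 := by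
  let Φ := LinearMap.toMatrixOrthonormal (stdOrthonormalBasis ℝ V)
  obtain ⟨u, hu, hcomm, hu4⟩ := (hP.map Φ).exists_pow_four_mul_eq_one
    (by rwa [AlgEquiv.spectrum_eq Φ P])
  refine ⟨Φ.symm u, hu.map Φ.symm, fun B hB => ?_, ?_⟩
  · have := (hcomm (Φ B) (hB.map Φ)).map Φ.symm
    rwa [StarAlgEquiv.symm_apply_apply] at this
  · rw [← Φ.symm_apply_apply P, ← map_pow, ← map_mul, hu4, map_one]

theorem LinearMap.pos_of_mem_spectrum_star_mul_self {A : Module.End ℝ V}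
    (hA : Function.Injective A) {μ : ℝ} (hμ : μ ∈ spectrum ℝ (star A * A)) : 0 < μ := by
  obtain ⟨v, hv⟩ := (Module.End.hasEigenvalue_iff_mem_spectrum.2 hμ).exists_hasEigenvector
  have hμv : μ * ‖v‖ ^ 2 = ‖A v‖ ^ 2 := by
    rw [← real_inner_self_eq_norm_sq, ← real_inner_self_eq_norm_sq, ← real_inner_smul_left,
      ← hv.apply_eq_smul, Module.End.mul_apply, LinearMap.star_eq_adjoint,
      LinearMap.adjoint_inner_left]
  have hAv : A v ≠ 0 := (map_ne_zero_iff A hA).2 hv.2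
  have hpos : 0 < μ * ‖v‖ ^ 2 := hμv ▸ by positivity
  exact pos_of_mul_pos_left hpos (by positivity)

theorem LinearMap.exists_mul_self_eq_neg_one_of_star_eq_neg {A : Module.End ℝ V}
    (hskew : star A = -A) (hA : Function.Injective A) :
    ∃ J : Module.End ℝ V, J * J = -1 ∧ star J * J = 1 ∧ Commute J A ∧
      ∀ x ≠ 0, 0 < ⟪A x, J x⟫ := by
  obtain ⟨U, hU, hUcomm, hU4⟩ := exists_pow_four_mul_eq_one (.star_mul_self A)
    fun _ => pos_of_mem_spectrum_star_mul_self hA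
  have hP : star A * A = -(A * A) := by rw [hskew, neg_mul]
  have hUA : Commute U A := hUcomm A <| hP ▸ ((Commute.refl A).mul_left (.refl A)).neg_left
  have hUP : Commute (U ^ 4) (star A * A) := (hUcomm _ (.refl _)).pow_left 4
  have hU2 : U ^ 2 * U ^ 2 = U ^ 4 := by rw [← pow_add]
  have hUinj : Function.Injective U := by
    have h : star A * A * U ^ 3 * U = 1 := by rw [mul_assoc, ← pow_succ, ← hUP.eq, hU4]
    exact Function.LeftInverse.injective (g := ⇑(star A * A * U ^ 3)) fun x => by
      rw [← Module.End.mul_apply, h, Module.End.one_apply]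
  refine ⟨A * U ^ 2, ?_, ?_, (Commute.refl A).mul_left (hUA.pow_left 2), fun x hx => ?_⟩
  · rw [(hUA.pow_left 2).mul_mul_mul_comm, hU2, ← neg_neg (A * A), ← hP, neg_mul, ← hUP.eq, hU4]
  · rw [star_mul, (hU.pow 2).star_eq, mul_assoc, ← mul_assoc (star A), ← mul_assoc,
      ((hUcomm _ (.refl _)).pow_left 2).eq, mul_assoc, hU2, ← hUP.eq, hU4]
  · have hUsymm := (LinearMap.isSymmetric_iff_isSelfAdjoint U).2 hU
    have hAUx : A (U x) ≠ 0 := (map_ne_zero_iff A hA).2 ((map_ne_zero_iff U hUinj).2 hx)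
    calc 0 < ⟪A (U x), A (U x)⟫ := real_inner_self_pos.2 hAUx
      _ = ⟪U (A x), A (U x)⟫ := by rw [← Module.End.mul_apply, ← hUA.eq, Module.End.mul_apply]
      _ = ⟪A x, U (A (U x))⟫ := hUsymm _ _
      _ = ⟪A x, (A * U ^ 2) x⟫ := by rw [pow_two, ← mul_assoc, ← hUA.eq]; rfl

theorem LinearMap.exists_inner_apply_eq (ω : V →ₗ[ℝ] V →ₗ[ℝ] ℝ) :
    ∃ A : Module.End ℝ V, ∀ x y, ⟪A x, y⟫ = ω x y :=
  ⟨(InnerProductSpace.toDual ℝ V).symm.toLinearEquiv.toLinearMap ∘ₗ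
    LinearMap.toContinuousLinearMap.toLinearMap ∘ₗ ω, fun x y => by
      simp [InnerProductSpace.toDual_symm_apply]⟩

end

/-- Every nondegenerate alternating bilinear form on a finite-dimensional real inner
product space admits a compatible complex structure `J`. -/
theorem stmt0 {V : Type*} [NormedAddCommGroup V] [InnerProductSpace ℝ V]
    [FiniteDimensional ℝ V] (ω : V →ₗ[ℝ] V →ₗ[ℝ] ℝ)
    (halt : ∀ x, ω x x = 0)
    (hnd : ∀ x : V, x ≠ 0 → ∃ y : V, ω x y ≠ 0) :
    ∃ J : V →ₗ[ℝ] V,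
      (∀ x, J (J x) = -x) ∧
      (∀ x y, ω (J x) (J y) = ω x y) ∧
      (∀ x : V, x ≠ 0 → 0 < ω x (J x)) := by
  obtain ⟨A, hA⟩ := LinearMap.exists_inner_apply_eq ω
  have hskew : star A = -A := LinearMap.ext fun x => ext_inner_right ℝ fun y => by
    rw [LinearMap.star_eq_adjoint, LinearMap.adjoint_inner_left, real_inner_comm, hA,
      LinearMap.neg_apply, inner_neg_left, hA, LinearMap.IsAlt.neg halt]
  have hinj : Function.Injective A := (injective_iff_map_eq_zero A).2 fun x hAx => by
    by_contra hx
    obtain ⟨y, hy⟩ := hnd x hx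
    exact hy (by rw [← hA, hAx, inner_zero_left])
  obtain ⟨J, hJJ, hJorth, hJA, hpos⟩ :=
    LinearMap.exists_mul_self_eq_neg_one_of_star_eq_neg hskew hinj
  refine ⟨J, fun x => ?_, fun x y => ?_, fun x hx => hA x (J x) ▸ hpos x hx⟩
  · rw [← Module.End.mul_apply, hJJ, LinearMap.neg_apply, Module.End.one_apply]
  · rw [← hA, ← hA, ← Module.End.mul_apply, ← hJA.eq, Module.End.mul_apply,
      ← LinearMap.adjoint_inner_right, ← LinearMap.star_eq_adjoint, ← Module.End.mul_apply,
      hJorth, Module.End.one_apply]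
end

section
/- Let V be a finite-dimensional complex normed vector space, m ≥ 1 an integer, and f : V → V a map with f(0) = 0 whose m-th iterate is the identity. Suppose f is differentiable at 0 with derivative a continuous linear automorphism L of V whose m-th power is the identity. Define ψ : V → V by ψ(z) = (1/m) ∑_{k=0}^{m−1} L^{−k}(f^{∘k}(z)). Then ψ ∘ f = L ∘ ψ, and ψ is differentiable at 0 with derivative equal to the identity. -/
/-!
Write `A = L`, `B = L⁻¹` and `S z = ∑_{k<m} Bᵏ (f^[k] z)`, so `ψ = m⁻¹ • S`. Shifting the index
by one gives `S (f z) = A (S z)`: the term `B^(m-1) (f^[m] z) = A z` that appears at the top is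
exactly the `k = 0` term of `A (S z)` that disappears. By the chain rule the `k`-th summand has
derivative `Bᵏ Aᵏ = 1` at the fixed point `0`, so `S` has derivative `m • 1` there.
-/

open Finset

theorem sum_pow_apply_iterate_apply_eq_apply_sum {R M : Type*} [Semiring R] [TopologicalSpace M]
    [AddCommMonoid M] [Module R M] {A B : M →L[R] M} {m : ℕ} {f : M → M}
    (hAB : A * B = 1) (hBm : B ^ m = 1) (hfm : f^[m] = id) (z : M) :
    ∑ k ∈ range m, (B ^ k) (f^[k] (f z)) = A (∑ k ∈ range m, (B ^ k) (f^[k] z)) := by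
  cases m with
  | zero => simp
  | succ n =>
    have hshift (k : ℕ) : A * B ^ (k + 1) = B ^ k := by
      rw [pow_succ', ← mul_assoc, hAB, one_mul]
    have hBn : B ^ n = A := by rw [← hshift, hBm, mul_one]
    simp only [← Function.iterate_succ_apply, map_sum, ← mul_apply_eq_comp]
    rw [sum_range_succ, sum_range_succ', hfm, hBn]
    simp only [hshift, pow_zero, mul_one, Function.iterate_zero, id]

theorem HasFDerivAt.sum_pow_apply_iterate {𝕜 E : Type*} [NontriviallyNormedField 𝕜]
    [NormedAddCommGroup E] [NormedSpace 𝕜 E] {f : E → E} {A : E →L[𝕜] E} {x : E}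
    (hf : HasFDerivAt f A x) (hx : f x = x) (B : E →L[𝕜] E) (m : ℕ) :
    HasFDerivAt (fun z => ∑ k ∈ range m, (B ^ k) (f^[k] z)) (∑ k ∈ range m, B ^ k * A ^ k) x :=
  HasFDerivAt.fun_sum fun k _ => (B ^ k).hasFDerivAt.comp x (hf.iterate hx k)

theorem stmt6_general {V : Type*} [NormedAddCommGroup V] [NormedSpace ℂ V]
    (m : ℕ) (hm : 1 ≤ m) (f : V → V) (hf0 : f 0 = 0) (hfm : f^[m] = id)
    (L : V ≃L[ℂ] V) (hL : (L : V →L[ℂ] V) ^ m = 1)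
    (hdf : HasFDerivAt f (L : V →L[ℂ] V) 0)
    (ψ : V → V)
    (hψ : ∀ z : V,
      ψ z = (m : ℂ)⁻¹ • ∑ k ∈ Finset.range m, ((L.symm : V →L[ℂ] V) ^ k) (f^[k] z)) :
    (∀ z : V, ψ (f z) = L (ψ z)) ∧ HasFDerivAt ψ (ContinuousLinearMap.id ℂ V) 0 := by
  set B : V →L[ℂ] V := (L.symm : V →L[ℂ] V)
  have hAB : (L : V →L[ℂ] V) * B = 1 := L.coe_comp_coe_symm
  have hBA : B * L = 1 := L.coe_symm_comp_coe
  have hBm : B ^ m = 1 := by simpa [hL] using pow_mul_pow_eq_one m hBA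
  obtain rfl : ψ = _ := funext hψ
  refine ⟨fun z => ?_, ?_⟩
  · simp only [sum_pow_apply_iterate_apply_eq_apply_sum hAB hBm hfm, map_smul,
      ContinuousLinearEquiv.coe_coe]
  · have hm0 : (m : ℂ) ≠ 0 := Nat.cast_ne_zero.mpr (Nat.one_le_iff_ne_zero.mp hm)
    have hmean : (m : ℂ)⁻¹ • ∑ k ∈ range m, B ^ k * L ^ k = ContinuousLinearMap.id ℂ V := by
      simp only [pow_mul_pow_eq_one _ hBA, sum_const, card_range, ← Nat.cast_smul_eq_nsmul ℂ,
        smul_smul, inv_mul_cancel₀ hm0, one_smul]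
      rfl
    exact hmean ▸ (hdf.sum_pow_apply_iterate hf0 B m).const_smul (m : ℂ)⁻¹

/-- Averaging linearization: if `f` fixes `0`, `f^[m] = id`, and `f` is differentiable
at `0` with derivative a continuous linear automorphism `L` with `L^m = 1`, then
`ψ(z) = (1/m) ∑_{k<m} L^{-k}(f^[k](z))` satisfies `ψ ∘ f = L ∘ ψ` and `ψ` is
differentiable at `0` with derivative the identity. -/
theorem stmt6 {V : Type*} [NormedAddCommGroup V] [NormedSpace ℂ V]
    [FiniteDimensional ℂ V]
    (m : ℕ) (hm : 1 ≤ m) (f : V → V) (hf0 : f 0 = 0) (hfm : f^[m] = id)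
    (L : V ≃L[ℂ] V) (hL : (L : V →L[ℂ] V) ^ m = 1)
    (hdf : HasFDerivAt f (L : V →L[ℂ] V) 0)
    (ψ : V → V)
    (hψ : ∀ z : V,
      ψ z = (m : ℂ)⁻¹ • ∑ k ∈ Finset.range m, ((L.symm : V →L[ℂ] V) ^ k) (f^[k] z)) :
    (∀ z : V, ψ (f z) = L (ψ z)) ∧ HasFDerivAt ψ (ContinuousLinearMap.id ℂ V) 0 :=
  stmt6_general m hm f hf0 hfm L hL hdf ψ hψ
end

section
/- Let p be a prime, n ≥ 1, and e₁, …, e_n positive integers. Let B : ℤⁿ × ℤⁿ → ℤ be a bilinear form and D₁, …, D_n ∈ ℤⁿ. Suppose that the map ℤⁿ → (ℤ/p^{e₁}) × ⋯ × (ℤ/p^{e_n}) sending S to (B(S, D₁) mod p^{e₁}, …, B(S, D_n) mod p^{e_n}) is surjective. Then D₁, …, D_n are linearly independent over ℤ, i.e. if b₁, …, b_n ∈ ℤ satisfy ∑ᵢ bᵢ Dᵢ = 0 then all bᵢ = 0. -/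
/-- If the map `S ↦ (B(S, Dᵢ) mod p^{eᵢ})ᵢ` from `ℤⁿ` to `∏ᵢ ℤ/p^{eᵢ}` is surjective,
then `D₁, …, D_n` are linearly independent over `ℤ`. -/
theorem stmt8 (p : ℕ) (hp : p.Prime) (n : ℕ) (hn : 1 ≤ n)
    (e : Fin n → ℕ) (he : ∀ i, 0 < e i)
    (B : (Fin n → ℤ) →ₗ[ℤ] (Fin n → ℤ) →ₗ[ℤ] ℤ) (D : Fin n → (Fin n → ℤ))
    (hsurj : Function.Surjective
      (fun S : Fin n → ℤ => fun i : Fin n => ((B S (D i) : ℤ) : ZMod (p ^ e i)))) :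
    ∀ b : Fin n → ℤ, ∑ i, b i • D i = 0 → ∀ i, b i = 0 := by
  have hp2 : 2 ≤ p := hp.two_le
  have hpz : (p : ℤ) ≠ 0 := by exact_mod_cast hp.ne_zero
  -- Key step: any relation has all coefficients divisible by p.
  have key : ∀ b : Fin n → ℤ, ∑ i, b i • D i = 0 → ∀ j, (p : ℤ) ∣ b j := by
    intro b hb j
    obtain ⟨S, hS⟩ := hsurj (fun i => if i = j then 1 else 0)
    have hdvd : ∀ i, i ≠ j → (p : ℤ) ∣ B S (D i) := by
      intro i hij
      have h := congrFun hS i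
      simp only [if_neg hij] at h
      have h1 : ((p ^ e i : ℕ) : ℤ) ∣ B S (D i) :=
        (ZMod.intCast_zmod_eq_zero_iff_dvd _ _).mp h
      refine dvd_trans ?_ h1
      exact_mod_cast dvd_pow_self (p : ℤ) (he i).ne'
    have hj1 : (p : ℤ) ∣ B S (D j) - 1 := by
      have h := congrFun hS j
      simp only [if_pos rfl] at h
      have h2 : ((B S (D j) : ℤ) : ZMod (p ^ e j)) = ((1 : ℤ) : ZMod (p ^ e j)) := by
        simpa using h
      have h3 : ((p ^ e j : ℕ) : ℤ) ∣ B S (D j) - 1 := by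
        have h4 := ((ZMod.intCast_eq_intCast_iff _ _ _).mp h2).dvd
        have h5 := dvd_neg.mpr h4
        simpa using h5
      refine dvd_trans ?_ h3
      exact_mod_cast dvd_pow_self (p : ℤ) (he j).ne'
    have hsum : ∑ i, b i * B S (D i) = 0 := by
      have h := congrArg (B S) hb
      simp only [map_sum, map_smul, smul_eq_mul, map_zero] at h
      exact h
    have hcast : ((b j : ℤ) : ZMod p) = 0 := by
      have hc := congrArg (fun z : ℤ => (z : ZMod p)) hsum
      push_cast at hc
      rw [Finset.sum_eq_single j] at hc
      · have h1 : ((B S (D j) : ℤ) : ZMod p) = 1 := by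
          have h0 : (((B S (D j) - 1 : ℤ)) : ZMod p) = 0 :=
            (ZMod.intCast_zmod_eq_zero_iff_dvd _ _).mpr hj1
          push_cast at h0
          linear_combination h0
        rw [h1, mul_one] at hc
        exact hc
      · intro i _ hij
        have h0 : ((B S (D i) : ℤ) : ZMod p) = 0 :=
          (ZMod.intCast_zmod_eq_zero_iff_dvd _ _).mpr (hdvd i hij)
        rw [h0, mul_zero]
      · intro h; exact absurd (Finset.mem_univ j) h
    exact (ZMod.intCast_zmod_eq_zero_iff_dvd _ _).mp hcast
  -- Infinite descent.
  have main : ∀ N : ℕ, ∀ b : Fin n → ℤ, ∑ i, b i • D i = 0 →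
      ∀ i, (b i).natAbs ≤ N → b i = 0 := by
    intro N
    induction N with
    | zero => intro b _ i h; exact Int.natAbs_eq_zero.mp (Nat.le_zero.mp h)
    | succ N ih =>
      intro b hb i hle
      have hd := key b hb
      choose c hc using hd
      have hc0 : ∑ k, c k • D k = 0 := by
        have hps : (p : ℤ) • ∑ k, c k • D k = 0 := by
          rw [Finset.smul_sum]
          rw [← hb]
          congr 1
          ext k
          rw [hc k, mul_smul]
        rcases smul_eq_zero.mp hps with h | h
        · exact absurd h hpz
        · exact h
      have hcle : (c i).natAbs ≤ N := by
        by_cases hci : c i = 0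
        · simp [hci]
        · have h1 : 1 ≤ (c i).natAbs := Nat.one_le_iff_ne_zero.mpr (Int.natAbs_ne_zero.mpr hci)
          have h2 : (b i).natAbs = p * (c i).natAbs := by
            rw [hc i, Int.natAbs_mul, Int.natAbs_natCast]
          have : (c i).natAbs < (b i).natAbs := by
            rw [h2]
            calc (c i).natAbs < 2 * (c i).natAbs := by omega
            _ ≤ p * (c i).natAbs := Nat.mul_le_mul_right _ hp2
          omega
      have := ih c hc0 i hcle
      rw [hc i, this, mul_zero]
  intro b hb i
  exact main (b i).natAbs b hb i le_rfl
end

section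
/- For δ ∈ ℝ, let ω_δ be the alternating bilinear form on ℝ⁴ given by ω_δ(x,y) = (x₁y₂−x₂y₁) + (x₃y₄−x₄y₃) + (x₂y₃−x₃y₂) + δ(x₁y₄−x₄y₁) + (x₂y₄−x₄y₂) − δ(x₁y₃−x₃y₁). Let δ > 0 and ε > 0, and let e₁, e₂, e₃, e₄ be the standard basis of ℝ⁴. Then each of the following 2-planes is ω_δ-isotropic (ω_δ vanishes on every pair of its vectors): (i) span{e₁, −δe₂ + e₄}; (ii) span{e₁, δe₂ + e₃}; (iii) for every θ ∈ ℝ, span{e₃, (−(ε/δ)(cos θ + sin θ), −ε sin θ, 0, ε cos θ)}; (iv) for every θ ∈ ℝ, span{e₄, (−(ε/δ)(cos θ − sin θ), −ε sin θ, ε cos θ, 0)}. -/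
/-- The bilinear form `ω_δ` on `ℝ⁴` given by
`ω = dx₁∧dx₂ + dx₃∧dx₄ + dx₂∧dx₃ + δ dx₁∧dx₄ + dx₂∧dx₄ − δ dx₁∧dx₃`. -/
def omegaDelta (δ : ℝ) (x y : Fin 4 → ℝ) : ℝ :=
  (x 0 * y 1 - x 1 * y 0) + (x 2 * y 3 - x 3 * y 2) + (x 1 * y 2 - x 2 * y 1)
    + δ * (x 0 * y 3 - x 3 * y 0) + (x 1 * y 3 - x 3 * y 1)
    - δ * (x 0 * y 2 - x 2 * y 0)

/-- A subspace `W ⊂ ℝ⁴` is `ω_δ`-isotropic if `ω_δ` vanishes on every pair of its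
vectors. -/
def IsIsotropic (δ : ℝ) (W : Submodule ℝ (Fin 4 → ℝ)) : Prop :=
  ∀ u ∈ W, ∀ v ∈ W, omegaDelta δ u v = 0

lemma omegaDelta_combo (δ : ℝ) (a b : Fin 4 → ℝ) (c d e f : ℝ) :
    omegaDelta δ (c • a + d • b) (e • a + f • b)
      = (c * f - d * e) * omegaDelta δ a b := by
  simp only [omegaDelta, Pi.add_apply, Pi.smul_apply, smul_eq_mul]
  ring

lemma span_pair_isotropic (δ : ℝ) (a b : Fin 4 → ℝ)
    (h : omegaDelta δ a b = 0) : IsIsotropic δ (Submodule.span ℝ {a, b}) := by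
  intro u hu v hv
  rw [Submodule.mem_span_pair] at hu hv
  obtain ⟨c, d, rfl⟩ := hu
  obtain ⟨e, f, rfl⟩ := hv
  rw [omegaDelta_combo, h, mul_zero]

/-- The tangent planes of the cylinders `C₁, C₂` and the tori `T₁, T₂` in
`(𝕋⁴, ω_δ)` are Lagrangian (isotropic). -/
theorem stmt14 (δ ε : ℝ) (hδ : 0 < δ) (hε : 0 < ε) :
    IsIsotropic δ (Submodule.span ℝ
      {![1, 0, 0, 0], ![0, -δ, 0, 1]}) ∧
    IsIsotropic δ (Submodule.span ℝ
      {![1, 0, 0, 0], ![0, δ, 1, 0]}) ∧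
    (∀ θ : ℝ, IsIsotropic δ (Submodule.span ℝ
      {![0, 0, 1, 0],
       ![-(ε / δ) * (Real.cos θ + Real.sin θ), -ε * Real.sin θ, 0, ε * Real.cos θ]})) ∧
    (∀ θ : ℝ, IsIsotropic δ (Submodule.span ℝ
      {![0, 0, 0, 1],
       ![-(ε / δ) * (Real.cos θ - Real.sin θ), -ε * Real.sin θ, ε * Real.cos θ, 0]})) := by
  have hδ' : δ ≠ 0 := ne_of_gt hδ
  refine ⟨?_, ?_, fun θ => ?_, fun θ => ?_⟩ <;>
    apply span_pair_isotropic <;>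
    · simp only [omegaDelta, Matrix.cons_val_zero, Matrix.cons_val_one, Matrix.head_cons,
        Matrix.cons_val_two, Matrix.tail_cons, Matrix.cons_val_three]
      field_simp
      try ring
end
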